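/- Let K be a field of characteristic zero, m, n ≥ 1, φ = (φ_1,…,φ_n) ∈ K[[t_1,…,t_m]]^n, and let M : {1,…,n} × ℤ_{≥0}^m → ℤ_{≥0} be finitely supported. Set E_M(φ) = ∏_{i,J} (Θ(J)φ_i)^{M_{i,J}} ∈ K[[t_1,…,t_m]]. Then trop(E_M(φ)) = ⊙_{i,J} Val_J(Supp(φ_i))^{⊙ M_{i,J}} = Vert(Σ_{i,J} M_{i,J}·Θ_trop(J)(Supp(φ_i))), where the sum is iterated Minkowski sum and k·X denotes the k-fold Minkowski sum of X with itself (0·X = {(0,…,0)}). -/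

import Mathlib

open Pointwise

noncomputable section

/-- The embedding of `ℤ_{≥0}^m` into `ℝ^m`. -/
def emb {m : ℕ} (x : Fin m →₀ ℕ) : Fin m → ℝ := fun i => (x i : ℝ)

/-- The Newton polygon of `X ⊆ ℤ_{≥0}^m`: the convex hull (in `ℝ^m`) of
`X + ℤ_{≥0}^m`. -/
def newton {m : ℕ} (X : Set (Fin m →₀ ℕ)) : Set (Fin m → ℝ) :=
  convexHull ℝ (emb '' (X + (Set.univ : Set (Fin m →₀ ℕ))))

/-- The vertex set of `X`: the elements `x ∈ X` with `x ∉ N(X \ {x})`. -/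
def vert {m : ℕ} (X : Set (Fin m →₀ ℕ)) : Set (Fin m →₀ ℕ) :=
  {x ∈ X | emb x ∉ newton (X \ {x})}

variable {K : Type} [Field K]

/-- The support of a multivariate formal power series. -/
def supp {m : ℕ} (φ : MvPowerSeries (Fin m) K) : Set (Fin m →₀ ℕ) :=
  {L | MvPowerSeries.coeff L φ ≠ 0}

/-- The tropicalization of a multivariate formal power series: the vertex set of
its support. -/
def trop {m : ℕ} (φ : MvPowerSeries (Fin m) K) : Set (Fin m →₀ ℕ) :=
  vert (supp φ)

/-- The iterated formal partial derivative `Θ(J)φ`, defined by its coefficients: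
the coefficient of `t^L` in `Θ(J)φ` is `((L+J)!/L!) · a_{L+J}`. -/
def theta {m : ℕ} (J : Fin m →₀ ℕ) (φ : MvPowerSeries (Fin m) K) :
    MvPowerSeries (Fin m) K :=
  fun L => ((∏ i : Fin m, ((L i + J i).factorial / (L i).factorial) : ℕ) : K) *
    MvPowerSeries.coeff (L + J) φ

/-- The tropical derivative operator. -/
def thetaTrop {m : ℕ} (J : Fin m →₀ ℕ) (T : Set (Fin m →₀ ℕ)) : Set (Fin m →₀ ℕ) :=
  {L | L + J ∈ T}

/-- `Val_J(S) = Vert(Θ_trop(J) S)`. -/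
def valJ {m : ℕ} (J : Fin m →₀ ℕ) (S : Set (Fin m →₀ ℕ)) : Set (Fin m →₀ ℕ) :=
  vert (thetaTrop J S)

/-- Tropical product of supports (via Minkowski sum). -/
def odot {m : ℕ} (S T : Set (Fin m →₀ ℕ)) : Set (Fin m →₀ ℕ) := vert (S + T)

/-- `k`-fold Minkowski sum `kX = X + ⋯ + X`, with `0X = {(0,…,0)}`. -/
def nMink {m : ℕ} : ℕ → Set (Fin m →₀ ℕ) → Set (Fin m →₀ ℕ)
  | 0, _ => {0}
  | k + 1, X => X + nMink k X

/-- `k`-fold tropical power `S^{⊙k}`, with `S^{⊙0} = {(0,…,0)}`. -/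
def odotPow {m : ℕ} : ℕ → Set (Fin m →₀ ℕ) → Set (Fin m →₀ ℕ)
  | 0, _ => {0}
  | k + 1, S => odot S (odotPow k S)

/-!
A point `v` of `X ⊆ ℕ^m` is a vertex iff some strictly positive weight attains its minimum on `X`
only at `v`; the nontrivial direction separates `v` from the Newton polygon of `X \ {v}`, which is
closed because by Dickson's lemma it is generated by finitely many points. Hence a vertex of
`A + B` splits uniquely as a sum of vertices of `A` and `B`. By Krein–Milman on the finite face of
minimizers of a weight, `vert C ⊆ D ⊆ C` forces `vert D = vert C`; so `vert (A + B)` depends only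
on `vert A` and `vert B`, and `vert (supp (f * g)) = vert (supp f + supp g)` because at a vertex
the coefficient of `f * g` is a single nonzero product. In characteristic zero
`supp (Θ(J) φ) = Θ_trop(J) (supp φ)`, and both sides of the theorem reduce to
`vert (Σ M_{i,J} · Θ_trop(J) (supp φ_i))`.
-/

section Lattice

variable {m : ℕ}

@[simp] lemma emb_apply (x : Fin m →₀ ℕ) (i : Fin m) : emb x i = x i := rfl

@[simp] lemma emb_zero : emb (0 : Fin m →₀ ℕ) = 0 := by
  ext i; simp

lemma emb_add (a b : Fin m →₀ ℕ) : emb (a + b) = emb a + emb b := by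
  ext i; simp

lemma emb_nonneg (x : Fin m →₀ ℕ) : 0 ≤ emb x := fun i => by simp

lemma emb_injective : Function.Injective (emb (m := m)) :=
  fun _ _ h => Finsupp.ext fun i => by simpa using congrFun h i

lemma image_emb_add (X Y : Set (Fin m →₀ ℕ)) : emb '' (X + Y) = emb '' X + emb '' Y :=
  Set.image_image2_distrib emb_add

lemma convexHull_range_natCast : convexHull ℝ (Set.range ((↑) : ℕ → ℝ)) = Set.Ici 0 := by
  refine (convexHull_min ?_ (convex_Ici (0 : ℝ))).antisymm fun x (hx : 0 ≤ x) => ?_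
  · rintro _ ⟨n, rfl⟩
    exact Nat.cast_nonneg (α := ℝ) n
  · refine segment_subset_convexHull (𝕜 := ℝ) (Set.mem_range_self ⌊x⌋₊)
      (Set.mem_range_self (⌊x⌋₊ + 1)) ?_
    rw [segment_eq_Icc (by simp)]
    push_cast
    exact ⟨Nat.floor_le hx, (Nat.lt_floor_add_one x).le⟩

lemma image_emb_univ :
    emb '' (Set.univ : Set (Fin m →₀ ℕ)) = Set.univ.pi fun _ => Set.range ((↑) : ℕ → ℝ) := by
  ext x
  refine ⟨?_, fun hx => ?_⟩
  · rintro ⟨k, -, rfl⟩ i -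
    exact ⟨k i, rfl⟩
  · choose n hn using fun i => hx i trivial
    exact ⟨Finsupp.equivFunOnFinite.symm n, trivial, funext fun i => by simp [hn]⟩

lemma convexHull_image_emb_univ :
    convexHull ℝ (emb '' (Set.univ : Set (Fin m →₀ ℕ))) = Set.Ici 0 := by
  rw [image_emb_univ, convexHull_pi, convexHull_range_natCast, ← Set.pi_univ_Ici]
  rfl

end Lattice

lemma exists_finite_subset_forall_exists_le {α : Type*} [PartialOrder α] [WellQuasiOrderedLE α]
    (X : Set α) : ∃ B ⊆ X, B.Finite ∧ ∀ x ∈ X, ∃ b ∈ B, b ≤ x := by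
  refine ⟨{x | Minimal (· ∈ X) x}, fun _ hx => hx.prop,
    (setOfPred_minimal_antichain _).finite_of_partiallyWellOrderedOn
      (Set.isPWO_of_wellQuasiOrderedLE _), fun x hx => ?_⟩
  obtain ⟨b, hbx, hb⟩ := (Set.isPWO_of_wellQuasiOrderedLE X).exists_le_minimal hx
  exact ⟨b, hb, hbx⟩

section Newton

variable {m : ℕ}

lemma newton_mono {X Y : Set (Fin m →₀ ℕ)} (h : X ⊆ Y) : newton X ⊆ newton Y :=
  convexHull_mono (Set.image_mono (Set.add_subset_add_right h))

lemma newton_eq (X : Set (Fin m →₀ ℕ)) : newton X = convexHull ℝ (emb '' X) + Set.Ici 0 := by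
  rw [newton, image_emb_add, convexHull_add, convexHull_image_emb_univ]

lemma newton_eq_of_forall_exists_le {X B : Set (Fin m →₀ ℕ)} (hBX : B ⊆ X)
    (h : ∀ x ∈ X, ∃ b ∈ B, b ≤ x) : newton X = newton B := by
  refine congrArg (fun Y => convexHull ℝ (emb '' Y))
    ((?_ : X + Set.univ ⊆ B + Set.univ).antisymm (Set.add_subset_add_right hBX))
  rintro _ ⟨x, hx, k, -, rfl⟩
  obtain ⟨b, hb, hbx⟩ := h x hx
  obtain ⟨c, rfl⟩ := exists_add_of_le hbx
  exact ⟨b, hb, c + k, trivial, (add_assoc b c k).symm⟩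

lemma isClosed_newton (X : Set (Fin m →₀ ℕ)) : IsClosed (newton X) := by
  obtain ⟨B, hBX, hB, h⟩ := exists_finite_subset_forall_exists_le X
  rw [newton_eq_of_forall_exists_le hBX h, newton_eq]
  exact isClosed_Ici.add_left_of_isCompact ((hB.image emb).isCompact_convexHull ℝ)

lemma vert_subset (X : Set (Fin m →₀ ℕ)) : vert X ⊆ X := fun _ hx => hx.1

lemma vert_singleton (x : Fin m →₀ ℕ) : vert {x} = {x} := by
  refine (vert_subset _).antisymm ?_
  rintro _ rfl
  refine ⟨rfl, ?_⟩
  simp [newton]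

end Newton

section Weights

variable {m : ℕ}

lemma isLinearMap_dotProduct (w : Fin m → ℝ) : IsLinearMap ℝ (w ⬝ᵥ ·) :=
  ⟨dotProduct_add w, fun c x => dotProduct_smul c w x⟩

lemma dotProduct_emb_pos {w : Fin m → ℝ} (hw : ∀ i, 0 < w i) {k : Fin m →₀ ℕ} (hk : k ≠ 0) :
    0 < w ⬝ᵥ emb k := by
  obtain ⟨i, hi⟩ := Finsupp.ne_iff.1 hk
  exact Finset.sum_pos' (fun j _ => mul_nonneg (hw j).le (emb_nonneg k j))
    ⟨i, Finset.mem_univ i, mul_pos (hw i) (by simpa [Nat.pos_iff_ne_zero] using hi)⟩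

lemma finite_setOf_dotProduct_emb_le {w : Fin m → ℝ} (hw : ∀ i, 0 < w i) (c : ℝ) :
    {x : Fin m →₀ ℕ | w ⬝ᵥ emb x ≤ c}.Finite := by
  refine (Set.finite_Iic (Finsupp.equivFunOnFinite.symm fun i => ⌈c / w i⌉₊)).subset
    fun x (hx : w ⬝ᵥ emb x ≤ c) i => ?_
  have hi : w i * x i ≤ w ⬝ᵥ emb x :=
    Finset.single_le_sum (f := fun j => w j * emb x j)
      (fun j _ => mul_nonneg (hw j).le (emb_nonneg x j)) (Finset.mem_univ i)
  suffices (x i : ℝ) ≤ c / w i by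
    simpa using (show x i ≤ ⌈c / w i⌉₊ by exact_mod_cast this.trans (Nat.le_ceil _))
  rw [le_div_iff₀ (hw i)]
  linarith

lemma newton_subset_halfSpace {w : Fin m → ℝ} (hw : 0 ≤ w) {X : Set (Fin m →₀ ℕ)} {c : ℝ}
    (hX : ∀ x ∈ X, c < w ⬝ᵥ emb x) : newton X ⊆ {y | c < w ⬝ᵥ y} := by
  rw [newton_eq]
  rintro _ ⟨a, ha, b, hb, rfl⟩
  have hca : c < w ⬝ᵥ a := convexHull_min (by rintro _ ⟨x, hx, rfl⟩; exact hX x hx)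
    (convex_halfSpace_gt (isLinearMap_dotProduct w) c) ha
  have hwb : 0 ≤ w ⬝ᵥ b := dotProduct_nonneg_of_nonneg hw hb
  show c < w ⬝ᵥ (a + b)
  rw [dotProduct_add]
  linarith

lemma mem_vert_of_forall_lt {w : Fin m → ℝ} (hw : 0 ≤ w) {X : Set (Fin m →₀ ℕ)}
    {v : Fin m →₀ ℕ} (hv : v ∈ X) (h : ∀ y ∈ X, y ≠ v → w ⬝ᵥ emb v < w ⬝ᵥ emb y) :
    v ∈ vert X :=
  ⟨hv, fun hmem =>
    lt_irrefl (w ⬝ᵥ emb v) (newton_subset_halfSpace hw (fun y hy => h y hy.1 hy.2) hmem)⟩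

lemma nonneg_of_forall_lt_add_mul {a b u : ℝ} (h : ∀ t : ℝ, 0 ≤ t → u < a + b * t) : 0 ≤ b := by
  by_contra! hb
  have hua := h 0 le_rfl
  have := h ((a - u) / -b) (div_nonneg (by linarith) (by linarith))
  rw [mul_div_assoc', div_neg, mul_div_cancel_left₀ _ hb.ne] at this
  linarith

lemma exists_pos_weight_of_nonneg {w₀ p : Fin m → ℝ} (hw₀ : 0 ≤ w₀) (hp : 0 ≤ p) {u : ℝ}
    (hu : w₀ ⬝ᵥ p < u) :
    ∃ w : Fin m → ℝ, (∀ i, 0 < w i) ∧ w ⬝ᵥ p < u ∧ ∀ q, 0 ≤ q → w₀ ⬝ᵥ q ≤ w ⬝ᵥ q := by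
  set ε := (u - w₀ ⬝ᵥ p) / (1 ⬝ᵥ p + 1)
  have hp1 : 0 ≤ 1 ⬝ᵥ p := dotProduct_nonneg_of_nonneg zero_le_one hp
  have hε : 0 < ε := div_pos (by linarith) (by linarith)
  have hεp : ε * (1 ⬝ᵥ p + 1) = u - w₀ ⬝ᵥ p := div_mul_cancel₀ _ (by linarith)
  refine ⟨w₀ + ε • 1, fun i => by simpa using add_pos_of_nonneg_of_pos (hw₀ i) hε, ?_,
    fun q hq => ?_⟩
  · rw [add_dotProduct, smul_dotProduct, smul_eq_mul]
    nlinarith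
  · rw [add_dotProduct, smul_dotProduct, smul_eq_mul, le_add_iff_nonneg_right]
    exact mul_nonneg hε.le (dotProduct_nonneg_of_nonneg zero_le_one hq)

/-- The functional separating `emb v` from the Newton polygon of `X \ {v}` is nonnegative
because the polygon is stable under adding the orthant; a small perturbation makes it positive. -/
lemma exists_pos_weight_of_mem_vert {X : Set (Fin m →₀ ℕ)} {v : Fin m →₀ ℕ} (hv : v ∈ vert X) :
    ∃ w : Fin m → ℝ, (∀ i, 0 < w i) ∧ ∀ y ∈ X, y ≠ v → w ⬝ᵥ emb v < w ⬝ᵥ emb y := by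
  rcases (X \ {v}).eq_empty_or_nonempty with hX | ⟨y₀, hy₀⟩
  · exact ⟨1, fun _ => one_pos, fun y hy hne => (hX.subset ⟨hy, hne⟩).elim⟩
  obtain ⟨f, u, hfv, hf⟩ :=
    geometric_hahn_banach_point_closed (convex_convexHull ℝ _) (isClosed_newton (X \ {v})) hv.2
  set w₀ := (dotProductEquiv ℝ (Fin m)).symm f.toLinearMap
  have hw₀f (x : Fin m → ℝ) : w₀ ⬝ᵥ x = f x := by
    rw [← dotProductEquiv_apply_apply, LinearEquiv.apply_symm_apply]
    rfl
  have hnewton {y : Fin m →₀ ℕ} (hy : y ∈ X \ {v}) {q : Fin m → ℝ} (hq : 0 ≤ q) :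
      u < w₀ ⬝ᵥ (emb y + q) := by
    have hmem : emb y + q ∈ newton (X \ {v}) := by
      rw [newton_eq]
      exact Set.add_mem_add (subset_convexHull ℝ _ ⟨y, hy, rfl⟩) hq
    rw [hw₀f]
    exact hf _ hmem
  have hw₀ : 0 ≤ w₀ := fun i =>
    nonneg_of_forall_lt_add_mul (a := w₀ ⬝ᵥ emb y₀) (u := u) fun t ht => by
    simpa [dotProduct_add, dotProduct_single] using
      hnewton hy₀ (q := Pi.single i t) (Pi.single_nonneg.2 ht)
  obtain ⟨w, hw, hwv, hww₀⟩ :=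
    exists_pos_weight_of_nonneg hw₀ (emb_nonneg v) (by rwa [hw₀f])
  refine ⟨w, hw, fun y hy hne => ?_⟩
  calc w ⬝ᵥ emb v < u := hwv
    _ < w₀ ⬝ᵥ emb y := by simpa using hnewton ⟨hy, hne⟩ le_rfl
    _ ≤ w ⬝ᵥ emb y := hww₀ _ (emb_nonneg y)

lemma mem_vert_iff {X : Set (Fin m →₀ ℕ)} {v : Fin m →₀ ℕ} :
    v ∈ vert X ↔ v ∈ X ∧ ∃ w : Fin m → ℝ, (∀ i, 0 < w i) ∧
      ∀ y ∈ X, y ≠ v → w ⬝ᵥ emb v < w ⬝ᵥ emb y :=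
  ⟨fun hv => ⟨hv.1, exists_pos_weight_of_mem_vert hv⟩,
    fun ⟨hv, _, hw, h⟩ => mem_vert_of_forall_lt (fun i => (hw i).le) hv h⟩

end Weights

lemma mem_convexHull_inter_of_eq {E : Type*} [AddCommGroup E] [Module ℝ E] {f : E → ℝ}
    (hf : IsLinearMap ℝ f) {Z : Set E} {μ : ℝ} (hZ : ∀ z ∈ Z, μ ≤ f z) {x : E}
    (hx : x ∈ convexHull ℝ Z) (hfx : f x = μ) : x ∈ convexHull ℝ (Z ∩ {z | f z = μ}) := by
  set Q := convexHull ℝ (Z ∩ {z | f z = μ}) ∪ {z | μ < f z}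
  have hge : ∀ z ∈ Q, μ ≤ f z := by
    rintro z (hz | hz)
    · exact convexHull_min (fun z hz => (hz.2 : f z = μ).ge) (convex_halfSpace_ge hf μ) hz
    · exact le_of_lt hz
  have hQ : Convex ℝ Q := by
    refine convex_iff_forall_pos.2 fun p hp q hq a b ha hb hab => ?_
    by_cases h : p ∈ convexHull ℝ (Z ∩ {z | f z = μ}) ∧ q ∈ convexHull ℝ (Z ∩ {z | f z = μ})
    · exact Or.inl (convex_convexHull ℝ _ h.1 h.2 ha.le hb.le hab)
    right
    show μ < f (a • p + b • q)
    rw [hf.map_add, hf.map_smul, hf.map_smul, smul_eq_mul, smul_eq_mul]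
    have hμ : a * μ + b * μ = μ := by rw [← add_mul, hab, one_mul]
    have hp' := mul_le_mul_of_nonneg_left (hge p hp) ha.le
    have hq' := mul_le_mul_of_nonneg_left (hge q hq) hb.le
    rcases not_and_or.1 h with hp'' | hq''
    · linarith [mul_lt_mul_of_pos_left (hp.resolve_left hp'' : μ < f p) ha]
    · linarith [mul_lt_mul_of_pos_left (hq.resolve_left hq'' : μ < f q) hb]
  have hZQ : Z ⊆ Q := fun z hz => (hZ z hz).eq_or_lt.elim
    (fun h => Or.inl (subset_convexHull ℝ _ ⟨hz, h.symm⟩)) Or.inr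
  exact (convexHull_min hZQ hQ hx).resolve_right hfx.not_gt

section Faces

variable {m : ℕ} {w : Fin m → ℝ} {X : Set (Fin m →₀ ℕ)} {μ : ℝ}

/-- Translates by nonzero points of the orthant leave the face `w = μ`, so the Newton polygon of
`X \ {x}` meets that face only in the convex hull of the other points of the face. -/
lemma mem_vert_of_notMem_convexHull (hw : ∀ i, 0 < w i) (hμ : ∀ y ∈ X, μ ≤ w ⬝ᵥ emb y)
    {x : Fin m →₀ ℕ} (hx : x ∈ {y ∈ X | w ⬝ᵥ emb y = μ})
    (hconv : emb x ∉ convexHull ℝ (emb '' ({y ∈ X | w ⬝ᵥ emb y = μ} \ {x}))) : x ∈ vert X := by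
  refine ⟨hx.1, fun hmem => hconv (convexHull_mono ?_ (mem_convexHull_inter_of_eq
    (isLinearMap_dotProduct w) ?_ hmem hx.2))⟩
  · rintro _ ⟨⟨_, ⟨y, hy, k, -, rfl⟩, rfl⟩, hyk : w ⬝ᵥ emb (y + k) = μ⟩
    rw [emb_add, dotProduct_add] at hyk
    have hk : k = 0 := by
      by_contra hk
      linarith [hμ y hy.1, dotProduct_emb_pos hw hk]
    subst hk
    exact ⟨y, ⟨⟨hy.1, by simpa using hyk⟩, hy.2⟩, by simp⟩
  · rintro _ ⟨_, ⟨y, hy, k, -, rfl⟩, rfl⟩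
    rw [emb_add, dotProduct_add]
    linarith [hμ y hy.1, dotProduct_nonneg_of_nonneg (fun i => (hw i).le) (emb_nonneg k)]

lemma image_setOf_eq_subset_convexHull_vert (hw : ∀ i, 0 < w i)
    (hμ : ∀ y ∈ X, μ ≤ w ⬝ᵥ emb y) :
    emb '' {y ∈ X | w ⬝ᵥ emb y = μ} ⊆
      convexHull ℝ (emb '' ({y ∈ X | w ⬝ᵥ emb y = μ} ∩ vert X)) := by
  set S := {y ∈ X | w ⬝ᵥ emb y = μ}
  have hS : S.Finite := (finite_setOf_dotProduct_emb_le hw μ).subset fun y hy => hy.2.le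
  have hext : (convexHull ℝ (emb '' S)).extremePoints ℝ ⊆ emb '' (S ∩ vert X) := by
    intro e he
    obtain ⟨x, hx, rfl⟩ := extremePoints_convexHull_subset he
    rw [(convex_convexHull ℝ _).mem_extremePoints_iff_mem_sdiff_convexHull_sdiff] at he
    refine ⟨x, ⟨hx, mem_vert_of_notMem_convexHull hw hμ hx fun hmem => he.2 ?_⟩, rfl⟩
    refine convexHull_mono ?_ hmem
    rintro _ ⟨y, hy, rfl⟩
    exact ⟨subset_convexHull ℝ _ ⟨y, hy.1, rfl⟩, fun h => hy.2 (emb_injective h)⟩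
  calc emb '' S ⊆ convexHull ℝ (emb '' S) := subset_convexHull ℝ _
    _ = closure (convexHull ℝ ((convexHull ℝ (emb '' S)).extremePoints ℝ)) :=
      (closure_convexHull_extremePoints ((hS.image emb).isCompact_convexHull ℝ)
        (convex_convexHull ℝ _)).symm
    _ ⊆ closure (convexHull ℝ (emb '' (S ∩ vert X))) := closure_mono (convexHull_mono hext)
    _ = convexHull ℝ (emb '' (S ∩ vert X)) :=
      (((hS.subset Set.inter_subset_left).image emb).isCompact_convexHull ℝ).isClosed.closure_eq

end Faces

section Vertices

variable {m : ℕ}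

/-- A weight minimized uniquely on `D` at `v` is minimized on `C` on a face whose vertices lie
in `D`, hence all at `v`; by Krein–Milman that face is `{v}`. -/
lemma vert_eq_of_vert_subset_of_subset {C D : Set (Fin m →₀ ℕ)} (h₁ : vert C ⊆ D) (h₂ : D ⊆ C) :
    vert D = vert C := by
  refine Set.Subset.antisymm (fun v hv => ?_)
    fun v hv => ⟨h₁ hv, fun hmem => hv.2 (newton_mono (Set.sdiff_subset_sdiff_left h₂) hmem)⟩
  obtain ⟨hvD, w, hw, hmin⟩ := mem_vert_iff.1 hv
  obtain ⟨c, ⟨hcC, hcv⟩, hc⟩ := Set.exists_min_image {y ∈ C | w ⬝ᵥ emb y ≤ w ⬝ᵥ emb v}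
    (w ⬝ᵥ emb ·) ((finite_setOf_dotProduct_emb_le hw _).subset fun y hy => hy.2)
    ⟨v, h₂ hvD, le_rfl⟩
  have hμ : ∀ y ∈ C, w ⬝ᵥ emb c ≤ w ⬝ᵥ emb y := fun y hy =>
    (le_or_gt (w ⬝ᵥ emb y) (w ⬝ᵥ emb v)).elim (fun h => hc y ⟨hy, h⟩) fun h => hcv.trans h.le
  have hface : {y ∈ C | w ⬝ᵥ emb y = w ⬝ᵥ emb c} ∩ vert C ⊆ {v} := by
    rintro y ⟨⟨-, hyc⟩, hy⟩
    by_contra hne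
    linarith [hmin y (h₁ hy) hne]
  have hS : ∀ y ∈ C, w ⬝ᵥ emb y = w ⬝ᵥ emb c → y = v := fun y hy hyc => by
    have := convexHull_mono (Set.image_mono hface)
      (image_setOf_eq_subset_convexHull_vert hw hμ ⟨y, ⟨hy, hyc⟩, rfl⟩)
    rw [Set.image_singleton, convexHull_singleton] at this
    exact emb_injective this
  obtain rfl := hS c hcC rfl
  exact mem_vert_iff.2 ⟨h₂ hvD, w, hw, fun y hy hne =>
    (hμ y hy).lt_of_ne fun h => hne (hS y hy h.symm)⟩

lemma exists_vert_add_decomposition {A B : Set (Fin m →₀ ℕ)} {v : Fin m →₀ ℕ}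
    (hv : v ∈ vert (A + B)) : ∃ a ∈ vert A, ∃ b ∈ vert B, a + b = v ∧
      ∀ a' ∈ A, ∀ b' ∈ B, a' + b' = v → a' = a ∧ b' = b := by
  obtain ⟨⟨a, ha, b, hb, rfl⟩, w, hw, hmin⟩ := mem_vert_iff.1 hv
  have hA : ∀ a' ∈ A, a' ≠ a → w ⬝ᵥ emb a < w ⬝ᵥ emb a' := fun a' ha' hne => by
    have := hmin (a' + b) ⟨a', ha', b, hb, rfl⟩ (mt add_right_cancel hne)
    simp only [emb_add, dotProduct_add] at this
    linarith
  have hB : ∀ b' ∈ B, b' ≠ b → w ⬝ᵥ emb b < w ⬝ᵥ emb b' := fun b' hb' hne => by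
    have := hmin (a + b') ⟨a, ha, b', hb', rfl⟩ (mt add_left_cancel hne)
    simp only [emb_add, dotProduct_add] at this
    linarith
  have hw₀ : 0 ≤ w := fun i => (hw i).le
  refine ⟨a, mem_vert_of_forall_lt hw₀ ha hA, b, mem_vert_of_forall_lt hw₀ hb hB, rfl,
    fun a' ha' b' hb' hab => ?_⟩
  have hsum : w ⬝ᵥ emb a' + w ⬝ᵥ emb b' = w ⬝ᵥ emb a + w ⬝ᵥ emb b := by
    rw [← dotProduct_add, ← dotProduct_add, ← emb_add, ← emb_add, hab]
  obtain rfl : a' = a := by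
    by_contra hne
    have := hA a' ha' hne
    rcases eq_or_ne b' b with rfl | hb''
    · linarith
    · linarith [hB b' hb' hb'']
  exact ⟨rfl, add_left_cancel hab⟩

lemma vert_vert_add (A B : Set (Fin m →₀ ℕ)) : vert (vert A + B) = vert (A + B) :=
  vert_eq_of_vert_subset_of_subset
    (fun v hv => by
      obtain ⟨a, ha, b, hb, hab, -⟩ := exists_vert_add_decomposition hv
      exact ⟨a, ha, b, vert_subset B hb, hab⟩)
    (Set.add_subset_add_right (vert_subset A))

lemma vert_add_vert (A B : Set (Fin m →₀ ℕ)) : vert (A + vert B) = vert (A + B) := by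
  rw [add_comm, vert_vert_add, add_comm]

lemma vert_vert (A : Set (Fin m →₀ ℕ)) : vert (vert A) = vert A :=
  vert_eq_of_vert_subset_of_subset subset_rfl (vert_subset A)

lemma vert_add_congr {A A' B B' : Set (Fin m →₀ ℕ)} (hA : vert A = vert A')
    (hB : vert B = vert B') : vert (A + B) = vert (A' + B') := by
  rw [← vert_vert_add, hA, vert_vert_add, ← vert_add_vert, hB, vert_add_vert]

lemma vert_sum_congr {ι : Type*} (s : Finset ι) {X Y : ι → Set (Fin m →₀ ℕ)}
    (h : ∀ i, vert (X i) = vert (Y i)) : vert (∑ i ∈ s, X i) = vert (∑ i ∈ s, Y i) :=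
  Finset.sum_hom_rel (r := fun A B => vert A = vert B) rfl fun i _ _ => vert_add_congr (h i)

lemma vert_nMink_congr {X Y : Set (Fin m →₀ ℕ)} (h : vert X = vert Y) (k : ℕ) :
    vert (nMink k X) = vert (nMink k Y) := by
  induction k with
  | zero => rfl
  | succ k ih => exact vert_add_congr h ih

lemma odotPow_eq_vert_nMink (k : ℕ) (S : Set (Fin m →₀ ℕ)) : odotPow k S = vert (nMink k S) := by
  induction k with
  | zero => exact (vert_singleton 0).symm
  | succ k ih => exact (congrArg (fun T => vert (S + T)) ih).trans (vert_add_vert S _)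

lemma foldr_odot_eq_vert_sum (l : List (Set (Fin m →₀ ℕ))) : l.foldr odot {0} = vert l.sum := by
  induction l with
  | nil => exact (vert_singleton 0).symm
  | cons X l ih => exact (congrArg (fun T => vert (X + T)) ih).trans (vert_add_vert X _)

end Vertices

section PowerSeries

variable {m : ℕ}

lemma supp_one : supp (1 : MvPowerSeries (Fin m) K) = {0} := by
  ext L
  simp [supp, MvPowerSeries.coeff_one]

lemma supp_mul_subset (f g : MvPowerSeries (Fin m) K) : supp (f * g) ⊆ supp f + supp g := by
  intro v hv
  rw [supp, Set.mem_ofPred, MvPowerSeries.coeff_mul] at hv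
  obtain ⟨p, hp, hne⟩ := Finset.exists_ne_zero_of_sum_ne_zero hv
  exact ⟨p.1, left_ne_zero_of_mul hne, p.2, right_ne_zero_of_mul hne,
    Finset.HasAntidiagonal.mem_antidiagonal.1 hp⟩

lemma vert_add_subset_supp_mul (f g : MvPowerSeries (Fin m) K) :
    vert (supp f + supp g) ⊆ supp (f * g) := by
  intro v hv
  obtain ⟨a, ha, b, hb, hab, huniq⟩ := exists_vert_add_decomposition hv
  show MvPowerSeries.coeff v (f * g) ≠ 0
  rw [MvPowerSeries.coeff_mul, Finset.sum_eq_single_of_mem (a, b)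
    (Finset.HasAntidiagonal.mem_antidiagonal.2 hab)]
  · exact mul_ne_zero (vert_subset _ ha) (vert_subset _ hb)
  · rintro ⟨a', b'⟩ hp hne
    by_contra h
    obtain ⟨rfl, rfl⟩ := huniq a' (left_ne_zero_of_mul h) b' (right_ne_zero_of_mul h)
      (Finset.HasAntidiagonal.mem_antidiagonal.1 hp)
    exact hne rfl

lemma vert_supp_mul (f g : MvPowerSeries (Fin m) K) :
    vert (supp (f * g)) = vert (supp f + supp g) :=
  vert_eq_of_vert_subset_of_subset (vert_add_subset_supp_mul f g) (supp_mul_subset f g)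

lemma vert_supp_prod {ι : Type*} (s : Finset ι) (F : ι → MvPowerSeries (Fin m) K) :
    vert (supp (∏ i ∈ s, F i)) = vert (∑ i ∈ s, supp (F i)) := by
  classical
  induction s using Finset.induction_on with
  | empty => rw [Finset.prod_empty, Finset.sum_empty, supp_one]; rfl
  | insert i s hi ih =>
    rw [Finset.prod_insert hi, Finset.sum_insert hi, vert_supp_mul]
    exact vert_add_congr rfl ih

lemma vert_supp_pow (f : MvPowerSeries (Fin m) K) (k : ℕ) :
    vert (supp (f ^ k)) = vert (nMink k (supp f)) := by
  induction k with
  | zero => rw [pow_zero, supp_one]; rfl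
  | succ k ih =>
    rw [pow_succ', vert_supp_mul]
    exact vert_add_congr rfl ih

lemma supp_theta [CharZero K] (J : Fin m →₀ ℕ) (f : MvPowerSeries (Fin m) K) :
    supp (theta J f) = thetaTrop J (supp f) := by
  ext L
  have hc : ((∏ i : Fin m, ((L i + J i).factorial / (L i).factorial) : ℕ) : K) ≠ 0 :=
    Nat.cast_ne_zero.2 (Finset.prod_ne_zero_iff.2 fun i _ => (Nat.div_pos
      (Nat.factorial_le (Nat.le_add_right _ _)) (Nat.factorial_pos _)).ne')
  exact mul_ne_zero_iff.trans (and_iff_right hc)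

end PowerSeries

theorem trop_monomial_general (K : Type) [Field K] [CharZero K] (m n : ℕ)
    (φ : Fin n → MvPowerSeries (Fin m) K)
    (M : (Fin n × (Fin m →₀ ℕ)) →₀ ℕ) :
    trop (M.prod fun p k => theta p.2 (φ p.1) ^ k) =
      (M.support.toList.map fun p =>
        odotPow (M p) (valJ p.2 (supp (φ p.1)))).foldr odot {0} ∧
    (M.support.toList.map fun p =>
        odotPow (M p) (valJ p.2 (supp (φ p.1)))).foldr odot {0} =
      vert (M.sum fun p k => nMink k (thetaTrop p.2 (supp (φ p.1)))) := by
  have htrop : (M.support.toList.map fun p =>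
      odotPow (M p) (valJ p.2 (supp (φ p.1)))).foldr odot {0} =
      vert (M.sum fun p k => nMink k (thetaTrop p.2 (supp (φ p.1)))) := by
    rw [foldr_odot_eq_vert_sum, Finset.sum_map_toList]
    refine vert_sum_congr _ fun p => ?_
    rw [odotPow_eq_vert_nMink, vert_vert, valJ, vert_nMink_congr (vert_vert _)]
  refine ⟨?_, htrop⟩
  rw [htrop, trop, Finsupp.prod, vert_supp_prod]
  exact vert_sum_congr _ fun p => by rw [vert_supp_pow, supp_theta]

/-- The tropicalization of the value of a differential monomial
`E_M(φ) = ∏_{i,J} (Θ(J)φ_i)^{M_{i,J}}` equals the `⊙`-product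
`⊙_{i,J} Val_J(Supp φ_i)^{⊙M_{i,J}}`, which in turn equals the vertex set of the
iterated Minkowski sum `Σ_{i,J} M_{i,J}·Θ_trop(J)(Supp φ_i)`. -/
theorem trop_monomial (K : Type) [Field K] [CharZero K] (m n : ℕ)
    (hm : 1 ≤ m) (hn : 1 ≤ n)
    (φ : Fin n → MvPowerSeries (Fin m) K)
    (M : (Fin n × (Fin m →₀ ℕ)) →₀ ℕ) :
    trop (M.prod fun p k => theta p.2 (φ p.1) ^ k) =
      (M.support.toList.map fun p =>
        odotPow (M p) (valJ p.2 (supp (φ p.1)))).foldr odot {0} ∧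
    (M.support.toList.map fun p =>
        odotPow (M p) (valJ p.2 (supp (φ p.1)))).foldr odot {0} =
      vert (M.sum fun p k => nMink k (thetaTrop p.2 (supp (φ p.1)))) :=
  trop_monomial_general K m n φ M

end
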